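/- Let R ≥ 1, let E : Fin R → ℝ satisfy E(r) ≥ 0 for all r and E(r*) > 0 for a distinguished index r*, and let ρ ≥ 0 be a real number with E(r) ≤ ρ·E(r*) for all r ≠ r*. Then for every natural number γ, |(Σ_r (r : ℝ)·E(r)^γ) / (Σ_r E(r)^γ) − (r* : ℝ)| ≤ R²·ρ^γ, where indices r are cast to real numbers. -/
import Mathlib


/-- Geometric convergence of soft power attention: if every non-maximal
bin's energy is at most `ρ` times that of the distinguished bin `rstar`,
then the power-weighted index estimate is within `R² · ρ^γ` of `rstar`. -/
theorem soft_power_attention_bound (R : ℕ) (hR : 1 ≤ R)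
    (E : Fin R → ℝ) (hE : ∀ r, 0 ≤ E r)
    (rstar : Fin R) (hstar : 0 < E rstar)
    (ρ : ℝ) (hρ : 0 ≤ ρ) (hdom : ∀ r, r ≠ rstar → E r ≤ ρ * E rstar)
    (γ : ℕ) :
    |(∑ r, ((r : Fin R).val : ℝ) * E r ^ γ) / (∑ r, E r ^ γ) - (rstar.val : ℝ)| ≤
      (R : ℝ) ^ 2 * ρ ^ γ := by
  have hD0 : (0:ℝ) < E rstar ^ γ := pow_pos hstar γ
  have hDge : E rstar ^ γ ≤ ∑ r, E r ^ γ :=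
    Finset.single_le_sum (fun r _ => pow_nonneg (hE r) γ) (Finset.mem_univ rstar)
  have hD : (0:ℝ) < ∑ r, E r ^ γ := lt_of_lt_of_le hD0 hDge
  have hsplit : (∑ r, (((r : Fin R).val : ℝ) - (rstar.val : ℝ)) * E r ^ γ)
      = (∑ r, ((r : Fin R).val : ℝ) * E r ^ γ) - (rstar.val : ℝ) * ∑ r, E r ^ γ := by
    rw [Finset.mul_sum, ← Finset.sum_sub_distrib]
    exact Finset.sum_congr rfl (fun r _ => by ring)
  have key : (∑ r, ((r : Fin R).val : ℝ) * E r ^ γ) / (∑ r, E r ^ γ) - (rstar.val : ℝ)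
      = (∑ r, (((r : Fin R).val : ℝ) - (rstar.val : ℝ)) * E r ^ γ) / (∑ r, E r ^ γ) := by
    rw [hsplit, sub_div, mul_div_assoc, div_self hD.ne', mul_one]
  rw [key, abs_div, abs_of_pos hD]
  have hterm : ∀ r : Fin R, |(((r : Fin R).val : ℝ) - (rstar.val : ℝ)) * E r ^ γ|
      ≤ (R : ℝ) * (ρ ^ γ * E rstar ^ γ) := by
    intro r
    by_cases h : r = rstar
    · subst h
      simp only [sub_self, zero_mul, abs_zero]
      positivity
    · rw [abs_mul, abs_of_nonneg (pow_nonneg (hE r) γ)]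
      have h1 : |((r : Fin R).val : ℝ) - (rstar.val : ℝ)| ≤ (R : ℝ) := by
        rw [abs_sub_le_iff]
        constructor
        · have : ((r : Fin R).val : ℝ) ≤ R := by exact_mod_cast (r.isLt).le
          have : (0:ℝ) ≤ (rstar.val : ℝ) := by positivity
          linarith [show ((r : Fin R).val : ℝ) ≤ R from by exact_mod_cast r.isLt.le]
        · have : ((rstar.val : ℝ)) ≤ R := by exact_mod_cast rstar.isLt.le
          have : (0:ℝ) ≤ ((r : Fin R).val : ℝ) := by positivity
          linarith [show ((rstar.val : ℝ)) ≤ R from by exact_mod_cast rstar.isLt.le]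
      have h2 : E r ^ γ ≤ ρ ^ γ * E rstar ^ γ := by
        rw [← mul_pow]
        exact pow_le_pow_left₀ (hE r) (hdom r h) γ
      exact mul_le_mul h1 h2 (pow_nonneg (hE r) γ) (by positivity)
  have hnum : |∑ r, (((r : Fin R).val : ℝ) - (rstar.val : ℝ)) * E r ^ γ|
      ≤ (R : ℝ) ^ 2 * ρ ^ γ * E rstar ^ γ := by
    calc |∑ r, (((r : Fin R).val : ℝ) - (rstar.val : ℝ)) * E r ^ γ|
        ≤ ∑ r, |(((r : Fin R).val : ℝ) - (rstar.val : ℝ)) * E r ^ γ| :=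
          Finset.abs_sum_le_sum_abs _ _
      _ ≤ ∑ _r : Fin R, (R : ℝ) * (ρ ^ γ * E rstar ^ γ) :=
          Finset.sum_le_sum (fun r _ => hterm r)
      _ = (R : ℝ) * ((R : ℝ) * (ρ ^ γ * E rstar ^ γ)) := by
          simp [Finset.sum_const, Finset.card_univ]
      _ = (R : ℝ) ^ 2 * ρ ^ γ * E rstar ^ γ := by ring
  rw [div_le_iff₀ hD]
  exact hnum.trans (mul_le_mul_of_nonneg_left hDge (by positivity))
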